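/- arXiv:1603.05375 — 4 statements merged into one kernel-verified Lean document; each statement's English description precedes it below -/
import Mathlib

section
/- Let A be an N×N matrix with all entries strictly positive. If u > 0 is a componentwise positive vector, ρ a real number with A u ≤ ρ u componentwise and A u ≠ ρ u, then ρ(A) < ρ. -/
/-!
Put `v = A u`, a positive vector. Since `ρ u - A u` is nonnegative and nonzero and `A` is
entrywise positive, `A (ρ u - A u) = ρ v - A v` is strictly positive, so by finiteness
`A v ≤ c v` for some `0 ≤ c < ρ`. Such a `v` bounds every eigenvalue `z` by `c`: for an
eigenvector `x`, compare `|z| |x i|` with `c |x i|` at an index maximising `|x i| / v i`,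
using the triangle inequality and `|x| ≤ (|x i| / v i) v`.
-/

/-- The spectral radius of a real square matrix: the supremum of the moduli of
its complex eigenvalues. -/
noncomputable def specRad {n : ℕ} (A : Matrix (Fin n) (Fin n) ℝ) : ℝ :=
  sSup ((fun z : ℂ => ‖z‖) '' spectrum ℂ (A.map (Complex.ofReal)))

namespace Matrix

variable {n R : Type*} [Fintype n]

theorem mulVec_mono_of_nonneg [Semiring R] [PartialOrder R] [IsOrderedRing R]
    {A : Matrix n n R} (hA : ∀ i j, 0 ≤ A i j) {x y : n → R} (hxy : x ≤ y) :
    A *ᵥ x ≤ A *ᵥ y := fun i =>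
  Finset.sum_le_sum fun j _ => mul_le_mul_of_nonneg_left (hxy j) (hA i j)

theorem mulVec_pos_of_pos [Semiring R] [PartialOrder R] [IsStrictOrderedRing R]
    {A : Matrix n n R} (hA : ∀ i j, 0 < A i j) {x : n → R} (hx : 0 ≤ x) (hx0 : x ≠ 0)
    (i : n) : 0 < (A *ᵥ x) i := by
  obtain ⟨j, hj⟩ := Function.ne_iff.mp hx0
  exact Finset.sum_pos' (fun k _ => mul_nonneg (hA i k).le (hx k))
    ⟨j, Finset.mem_univ j, mul_pos (hA i j) ((hx j).lt_of_ne' hj)⟩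

theorem exists_mulVec_eq_smul_of_mem_spectrum [DecidableEq n] {K : Type*} [Field K]
    {B : Matrix n n K} {z : K} (hz : z ∈ spectrum K B) : ∃ x ≠ 0, B *ᵥ x = z • x := by
  rw [← spectrum_toLin', ← Module.End.hasEigenvalue_iff_mem_spectrum] at hz
  obtain ⟨x, hx⟩ := hz.exists_hasEigenvector
  exact ⟨x, hx.2, by simpa using hx.apply_eq_smul⟩

theorem norm_mulVec_map_ofReal_le {A : Matrix n n ℝ} (hA : ∀ i j, 0 ≤ A i j) (x : n → ℂ)
    (i : n) : ‖(A.map Complex.ofReal *ᵥ x) i‖ ≤ (A *ᵥ fun k => ‖x k‖) i :=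
  (norm_sum_le _ _).trans_eq <| Finset.sum_congr rfl fun k _ => by
    simp [Complex.norm_real, abs_of_nonneg (hA i k)]

theorem norm_le_of_mulVec_map_ofReal_eq_smul {A : Matrix n n ℝ} (hA : ∀ i j, 0 ≤ A i j)
    {v : n → ℝ} (hv : ∀ i, 0 < v i) {c : ℝ} (hAv : A *ᵥ v ≤ c • v) {x : n → ℂ}
    (hx : x ≠ 0) {z : ℂ} (hxz : A.map Complex.ofReal *ᵥ x = z • x) : ‖z‖ ≤ c := by
  obtain ⟨j, hj⟩ := Function.ne_iff.mp hx
  obtain ⟨i₀, -, hi₀⟩ :=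
    Finset.univ.exists_max_image (fun i => ‖x i‖ / v i) ⟨j, Finset.mem_univ j⟩
  set m := ‖x i₀‖ / v i₀ with hm_def
  have hx_le : (fun k => ‖x k‖) ≤ m • v := fun k =>
    (div_le_iff₀ (hv k)).1 (hi₀ k (Finset.mem_univ k))
  have hm : 0 < m :=
    (div_pos (norm_pos_iff.2 hj) (hv j)).trans_le (hi₀ j (Finset.mem_univ j))
  have hxi₀ : 0 < ‖x i₀‖ := (div_pos_iff_of_pos_right (hv i₀)).1 hm
  refine le_of_mul_le_mul_right ?_ hxi₀
  calc ‖z‖ * ‖x i₀‖ = ‖(A.map Complex.ofReal *ᵥ x) i₀‖ := by rw [hxz]; simp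
    _ ≤ (A *ᵥ fun k => ‖x k‖) i₀ := norm_mulVec_map_ofReal_le hA x i₀
    _ ≤ (A *ᵥ (m • v)) i₀ := mulVec_mono_of_nonneg hA hx_le i₀
    _ = m * (A *ᵥ v) i₀ := by rw [mulVec_smul]; rfl
    _ ≤ m * (c * v i₀) := mul_le_mul_of_nonneg_left (hAv i₀) hm.le
    _ = c * (m * v i₀) := by ring
    _ = c * ‖x i₀‖ := by rw [hm_def, div_mul_cancel₀ _ (hv i₀).ne']

end Matrix

open Matrix

theorem specRad_le_of_mulVec_le {N : ℕ} {A : Matrix (Fin N) (Fin N) ℝ}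
    (hA : ∀ i j, 0 ≤ A i j) {v : Fin N → ℝ} (hv : ∀ i, 0 < v i) {c : ℝ} (hc : 0 ≤ c)
    (hAv : A *ᵥ v ≤ c • v) : specRad A ≤ c := by
  refine Real.sSup_le ?_ hc
  rintro _ ⟨z, hz, rfl⟩
  obtain ⟨x, hx, hxz⟩ := exists_mulVec_eq_smul_of_mem_spectrum hz
  exact norm_le_of_mulVec_map_ofReal_eq_smul hA hv hAv hx hxz

theorem exists_le_smul_of_lt_mul {ι : Type*} [Fintype ι] [Nonempty ι] {v w : ι → ℝ}
    (hv : ∀ i, 0 < v i) (hw : 0 ≤ w) {ρ : ℝ} (hwρ : ∀ i, w i < ρ * v i) :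
    ∃ c, 0 ≤ c ∧ c < ρ ∧ w ≤ c • v := by
  have le_max (i : ι) : w i / v i ≤ Finset.univ.sup' Finset.univ_nonempty fun i => w i / v i :=
    Finset.le_sup' (fun i => w i / v i) (Finset.mem_univ i)
  refine ⟨Finset.univ.sup' Finset.univ_nonempty fun i => w i / v i, ?_, ?_, fun i => ?_⟩
  · obtain ⟨i⟩ := ‹Nonempty ι›
    exact (div_nonneg (hw i) (hv i).le).trans (le_max i)
  · exact (Finset.sup'_lt_iff _).2 fun i _ => (div_lt_iff₀ (hv i)).2 (hwρ i)
  · exact (div_le_iff₀ (hv i)).1 (le_max i)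

theorem stmt1 {N : ℕ} (A : Matrix (Fin N) (Fin N) ℝ)
    (hA : ∀ i j, 0 < A i j) (u : Fin N → ℝ) (hu : ∀ i, 0 < u i) (ρ : ℝ)
    (h : A.mulVec u ≤ ρ • u) (hne : A.mulVec u ≠ ρ • u) : specRad A < ρ := by
  have hu0 : u ≠ 0 := by
    rintro rfl
    simp at hne
  obtain ⟨i, -⟩ := Function.ne_iff.mp hu0
  have : Nonempty (Fin N) := ⟨i⟩
  set v := A *ᵥ u
  have hv : ∀ i, 0 < v i := mulVec_pos_of_pos hA (fun i => (hu i).le) hu0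
  have hAv_nonneg : 0 ≤ A *ᵥ v := by
    simpa using mulVec_mono_of_nonneg (fun i j => (hA i j).le) (x := 0) fun i => (hv i).le
  have hgap : ∀ i, 0 < (A *ᵥ (ρ • u - v)) i :=
    mulVec_pos_of_pos hA (sub_nonneg.2 h) (sub_ne_zero.2 hne.symm)
  have hAv : ∀ i, (A *ᵥ v) i < ρ * v i := fun i => by
    simpa [mulVec_sub, mulVec_smul] using hgap i
  obtain ⟨c, hc0, hcρ, hc⟩ := exists_le_smul_of_lt_mul hv hAv_nonneg hAv
  exact (specRad_le_of_mulVec_le (fun i j => (hA i j).le) hv hc0 hc).trans_lt hcρ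
end

section
/- Every IRU-set (independent row uncertainty set) of strictly positive N×M matrices is an H-set. -/
/-- A set of strictly positive `N × M` matrices is an *H-set* (hourglass set) if all its
elements are entrywise positive and, for every matrix `A₀` in the set and every
componentwise positive vector `u`, both assertions H1 and H2 of the hourglass
alternative hold. -/
def IsHSet {N M : ℕ} (S : Set (Matrix (Fin N) (Fin M) ℝ)) : Prop :=
  (∀ A ∈ S, ∀ i j, 0 < A i j) ∧
  ∀ A₀ ∈ S, ∀ u : Fin M → ℝ, (∀ j, 0 < u j) →
    ((∀ A ∈ S, A₀.mulVec u ≤ A.mulVec u) ∨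
      ∃ A' ∈ S, A'.mulVec u ≤ A₀.mulVec u ∧ A'.mulVec u ≠ A₀.mulVec u) ∧
    ((∀ A ∈ S, A.mulVec u ≤ A₀.mulVec u) ∨
      ∃ A' ∈ S, A₀.mulVec u ≤ A'.mulVec u ∧ A'.mulVec u ≠ A₀.mulVec u)

theorem stmt8 {N M : ℕ} (rows : Fin N → Set (Fin M → ℝ))
    (hne : ∀ i, (rows i).Nonempty)
    (hpos : ∀ i, ∀ a ∈ rows i, ∀ j, 0 < a j) :
    IsHSet {A : Matrix (Fin N) (Fin M) ℝ | ∀ i, A i ∈ rows i} := by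
  constructor
  · intro A hA i j; exact hpos i (A i) (hA i) j
  · intro A₀ hA₀ u hu
    constructor
    · by_cases h : ∀ A ∈ {A : Matrix (Fin N) (Fin M) ℝ | ∀ i, A i ∈ rows i},
        A₀.mulVec u ≤ A.mulVec u
      · exact Or.inl h
      · right
        push_neg at h
        obtain ⟨A, hA, hle⟩ := h
        rw [Pi.le_def] at hle; push_neg at hle
        obtain ⟨i, hi⟩ := hle
        refine ⟨A₀.updateRow i (A i), ?_, ?_, ?_⟩
        · intro k
          by_cases hk : k = i
          · subst hk; rw [Matrix.updateRow_self]; exact hA k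
          · rw [Matrix.updateRow_ne hk]; exact hA₀ k
        · intro k
          by_cases hk : k = i
          · subst hk
            simp only [Matrix.mulVec, Matrix.updateRow_self]
            exact le_of_lt hi
          · simp only [Matrix.mulVec, Matrix.updateRow_ne hk]
            exact le_refl _
        · intro heq
          have h2 := congrFun heq i
          simp only [Matrix.mulVec, Matrix.updateRow_self] at h2
          exact absurd h2 (ne_of_lt hi)
    · by_cases h : ∀ A ∈ {A : Matrix (Fin N) (Fin M) ℝ | ∀ i, A i ∈ rows i},
        A.mulVec u ≤ A₀.mulVec u
      · exact Or.inl h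
      · right
        push_neg at h
        obtain ⟨A, hA, hle⟩ := h
        rw [Pi.le_def] at hle; push_neg at hle
        obtain ⟨i, hi⟩ := hle
        refine ⟨A₀.updateRow i (A i), ?_, ?_, ?_⟩
        · intro k
          by_cases hk : k = i
          · subst hk; rw [Matrix.updateRow_self]; exact hA k
          · rw [Matrix.updateRow_ne hk]; exact hA₀ k
        · intro k
          by_cases hk : k = i
          · subst hk
            simp only [Matrix.mulVec, Matrix.updateRow_self]
            exact le_of_lt hi
          · simp only [Matrix.mulVec, Matrix.updateRow_ne hk]
            exact le_refl _
        · intro heq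
          have h2 := congrFun heq i
          simp only [Matrix.mulVec, Matrix.updateRow_self] at h2
          exact absurd h2 (ne_of_gt hi)
end

section
/- If 𝒜 and ℬ are H-sets of strictly positive N×M matrices, then their Minkowski sum 𝒜 + ℬ = {A + B : A ∈ 𝒜, B ∈ ℬ} is an H-set of positive N×M matrices. -/
theorem stmt9 {N M : ℕ} (𝒜 ℬ : Set (Matrix (Fin N) (Fin M) ℝ))
    (h𝒜 : IsHSet 𝒜) (hℬ : IsHSet ℬ) :
    IsHSet {C | ∃ A ∈ 𝒜, ∃ B ∈ ℬ, C = A + B} := by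
  obtain ⟨hApos, hA⟩ := h𝒜
  obtain ⟨hBpos, hB⟩ := hℬ
  constructor
  · rintro C ⟨A, hA', B, hB', rfl⟩ i j
    have := hApos A hA' i j
    have := hBpos B hB' i j
    simp only [Matrix.add_apply]
    linarith
  · rintro C₀ ⟨A₀, hA₀, B₀, hB₀, rfl⟩ u hu
    obtain ⟨hA1, hA2⟩ := hA A₀ hA₀ u hu
    obtain ⟨hB1, hB2⟩ := hB B₀ hB₀ u hu
    constructor
    · rcases hA1 with hA1 | ⟨A', hA', hle, hne⟩
      · rcases hB1 with hB1 | ⟨B', hB', hle, hne⟩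
        · left
          rintro C ⟨A, hAm, B, hBm, rfl⟩
          simp only [Matrix.add_mulVec]
          exact fun i => add_le_add (hA1 A hAm i) (hB1 B hBm i)
        · right
          refine ⟨A₀ + B', ⟨A₀, hA₀, B', hB', rfl⟩, ?_, ?_⟩
          · simp only [Matrix.add_mulVec]
            exact fun i => add_le_add le_rfl (hle i)
          · simp only [Matrix.add_mulVec]
            intro h
            exact hne (by funext i; have := congrFun h i; simp at this ⊢; linarith)
      · right
        refine ⟨A' + B₀, ⟨A', hA', B₀, hB₀, rfl⟩, ?_, ?_⟩
        · simp only [Matrix.add_mulVec]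
          exact fun i => add_le_add (hle i) le_rfl
        · simp only [Matrix.add_mulVec]
          intro h
          exact hne (by funext i; have := congrFun h i; simp at this ⊢; linarith)
    · rcases hA2 with hA2 | ⟨A', hA', hle, hne⟩
      · rcases hB2 with hB2 | ⟨B', hB', hle, hne⟩
        · left
          rintro C ⟨A, hAm, B, hBm, rfl⟩
          simp only [Matrix.add_mulVec]
          exact fun i => add_le_add (hA2 A hAm i) (hB2 B hBm i)
        · right
          refine ⟨A₀ + B', ⟨A₀, hA₀, B', hB', rfl⟩, ?_, ?_⟩
          · simp only [Matrix.add_mulVec]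
            exact fun i => add_le_add le_rfl (hle i)
          · simp only [Matrix.add_mulVec]
            intro h
            exact hne (by funext i; have := congrFun h i; simp at this ⊢; linarith)
      · right
        refine ⟨A' + B₀, ⟨A', hA', B₀, hB₀, rfl⟩, ?_, ?_⟩
        · simp only [Matrix.add_mulVec]
          exact fun i => add_le_add (hle i) le_rfl
        · simp only [Matrix.add_mulVec]
          intro h
          exact hne (by funext i; have := congrFun h i; simp at this ⊢; linarith)
end

section
/- Let 𝒜 be a compact H-set of strictly positive N×M matrices and ℬ a compact H-set of strictly positive M×N matrices. Then there exist matrices à ∈ 𝒜 and B̃ ∈ ℬ such that ρ(ÃB) ≤ ρ(ÃB̃) ≤ ρ(AB̃) for all A in the convex hull of 𝒜 and all B in the convex hull of ℬ. -/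
open Matrix Filter Topology

section Spectrum

variable {K n : Type*} [Field K] [Fintype n] [DecidableEq n]

theorem Matrix.mem_spectrum_iff_exists_mulVec_eq_smul {A : Matrix n n K} {μ : K} :
    μ ∈ spectrum K A ↔ ∃ v ≠ 0, A *ᵥ v = μ • v := by
  simp only [← spectrum_toLin', ← Module.End.hasEigenvalue_iff_mem_spectrum,
    Module.End.hasEigenvalue_iff, Submodule.ne_bot_iff, Module.End.mem_eigenspace_iff,
    toLin'_apply]
  exact ⟨fun ⟨v, hv, h0⟩ => ⟨v, h0, hv⟩, fun ⟨v, h0, hv⟩ => ⟨v, hv, h0⟩⟩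

theorem Matrix.spectrum_transpose (A : Matrix n n K) : spectrum K Aᵀ = spectrum K A := by
  ext μ
  simp only [mem_spectrum_iff_isRoot_charpoly, charpoly_transpose]

end Spectrum

section Positive

variable {m n : Type*}

theorem convex_setOf_pos : Convex ℝ {A : Matrix m n ℝ | ∀ i j, 0 < A i j} := by
  simp only [Set.ofPred_forall]
  exact convex_iInter fun i => convex_iInter fun j =>
    (convex_Ioi 0).is_linear_preimage (f := fun A : Matrix m n ℝ => A i j)
      ⟨fun _ _ => rfl, fun _ _ => rfl⟩

variable [Fintype n]

theorem Matrix.mulVec_mono {A : Matrix m n ℝ} (hA : ∀ i j, 0 ≤ A i j) {x y : n → ℝ}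
    (hxy : x ≤ y) : A *ᵥ x ≤ A *ᵥ y :=
  fun i => dotProduct_le_dotProduct_of_nonneg_left hxy (hA i)

theorem Matrix.mulVec_lt_mulVec_of_pos {A : Matrix m n ℝ} (hA : ∀ i j, 0 < A i j)
    {x y : n → ℝ} (hxy : x < y) (i : m) : (A *ᵥ x) i < (A *ᵥ y) i := by
  obtain ⟨hle, j, hj⟩ := Pi.lt_def.1 hxy
  exact Finset.sum_lt_sum (fun k _ => mul_le_mul_of_nonneg_left (hle k) (hA i k).le)
    ⟨j, Finset.mem_univ j, mul_lt_mul_of_pos_left hj (hA i j)⟩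

theorem Matrix.mulVec_pos [Nonempty n] {A : Matrix m n ℝ} (hA : ∀ i j, 0 < A i j)
    {x : n → ℝ} (hx : ∀ j, 0 < x j) (i : m) : 0 < (A *ᵥ x) i := by
  simpa using mulVec_lt_mulVec_of_pos hA (x := 0) (lt_of_strongLT hx) i

theorem Matrix.mul_apply_pos {l : Type*} [Nonempty n] {A : Matrix l n ℝ} {B : Matrix n m ℝ}
    (hA : ∀ i j, 0 < A i j) (hB : ∀ i j, 0 < B i j) (i : l) (k : m) : 0 < (A * B) i k :=
  Finset.sum_pos (fun j _ => mul_pos (hA i j) (hB j k)) Finset.univ_nonempty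

theorem convex_setOf_mulVec_le (v : n → ℝ) (x : m → ℝ) :
    Convex ℝ {B : Matrix m n ℝ | B *ᵥ v ≤ x} :=
  (convex_Iic x).is_linear_preimage ⟨fun A B => add_mulVec A B v, fun c A => smul_mulVec c A v⟩

theorem convex_setOf_le_mulVec (v : n → ℝ) (x : m → ℝ) :
    Convex ℝ {B : Matrix m n ℝ | x ≤ B *ᵥ v} :=
  (convex_Ici x).is_linear_preimage ⟨fun A B => add_mulVec A B v, fun c A => smul_mulVec c A v⟩

end Positive

theorem norm_le_of_mem_spectrum_of_mulVec_le {n : Type*} [Fintype n] [DecidableEq n]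
    {C : Matrix n n ℝ} (hC : ∀ i j, 0 ≤ C i j) {w : n → ℝ} (hw : ∀ i, 0 < w i) {l : ℝ}
    (h : C *ᵥ w ≤ l • w) {μ : ℂ} (hμ : μ ∈ spectrum ℂ (C.map Complex.ofReal)) : ‖μ‖ ≤ l := by
  obtain ⟨x, hx, hxμ⟩ := mem_spectrum_iff_exists_mulVec_eq_smul.1 hμ
  obtain ⟨j, hj⟩ := Function.ne_iff.1 hx
  obtain ⟨k, -, hk⟩ := Finset.exists_max_image Finset.univ (fun i => ‖x i‖ / w i)
    ⟨j, Finset.mem_univ j⟩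
  set t := ‖x k‖ / w k
  have hxt : ∀ i, ‖x i‖ ≤ t * w i := fun i =>
    (div_le_iff₀ (hw i)).1 (hk i (Finset.mem_univ i))
  have hxk : ‖x k‖ = t * w k := (div_mul_cancel₀ _ (hw k).ne').symm
  have ht : 0 < t := pos_of_mul_pos_left ((norm_pos_iff.2 hj).trans_le (hxt j)) (hw j).le
  have hxk_pos : 0 < ‖x k‖ := hxk ▸ mul_pos ht (hw k)
  refine le_of_mul_le_mul_right ?_ hxk_pos
  calc ‖μ‖ * ‖x k‖ = ‖(C.map Complex.ofReal *ᵥ x) k‖ := by simp [hxμ]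
    _ ≤ ∑ i, C k i * ‖x i‖ := by
        refine (norm_sum_le Finset.univ fun i => (C k i : ℂ) * x i).trans_eq
          (Finset.sum_congr rfl fun i _ => ?_)
        simp [abs_of_nonneg (hC k i)]
    _ ≤ ∑ i, C k i * (t * w i) :=
        Finset.sum_le_sum fun i _ => mul_le_mul_of_nonneg_left (hxt i) (hC k i)
    _ = t * (C *ᵥ w) k := by
        simp only [mulVec, dotProduct, Finset.mul_sum]
        exact Finset.sum_congr rfl fun i _ => by ring
    _ ≤ t * (l * w k) := mul_le_mul_of_nonneg_left (h k) ht.le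
    _ = l * ‖x k‖ := by rw [hxk]; ring

section SpectralRadius

variable {n : ℕ} {C : Matrix (Fin n) (Fin n) ℝ}

theorem norm_le_specRad {μ : ℂ} (hμ : μ ∈ spectrum ℂ (C.map Complex.ofReal)) :
    ‖μ‖ ≤ specRad C :=
  le_csSup ((C.map Complex.ofReal).finite_spectrum.image _).bddAbove ⟨μ, hμ, rfl⟩

theorem le_specRad_of_mulVec_eq_smul {v : Fin n → ℝ} (hv : v ≠ 0) {l : ℝ} (hl : 0 ≤ l)
    (h : C *ᵥ v = l • v) : l ≤ specRad C := by
  have hmem : (l : ℂ) ∈ spectrum ℂ (C.map Complex.ofReal) := by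
    refine mem_spectrum_iff_exists_mulVec_eq_smul.2 ⟨Complex.ofReal ∘ v, ?_, ?_⟩
    · exact fun h0 => hv (funext fun i => by simpa using congrFun h0 i)
    · ext i
      simpa [mulVec, dotProduct] using congrArg Complex.ofReal (congrFun h i)
  simpa [abs_of_nonneg hl] using norm_le_specRad hmem

theorem specRad_le_of_mulVec_le_s16 (hC : ∀ i j, 0 ≤ C i j) {w : Fin n → ℝ} (hw : ∀ i, 0 < w i)
    {l : ℝ} (hl : 0 ≤ l) (h : C *ᵥ w ≤ l • w) : specRad C ≤ l :=
  Real.sSup_le (by rintro _ ⟨μ, hμ, rfl⟩; exact norm_le_of_mem_spectrum_of_mulVec_le hC hw h hμ)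
    hl

theorem specRad_eq_of_mulVec_eq_smul [Nonempty (Fin n)] (hC : ∀ i j, 0 ≤ C i j)
    {w : Fin n → ℝ} (hw : ∀ i, 0 < w i) {l : ℝ} (hl : 0 ≤ l) (h : C *ᵥ w = l • w) :
    specRad C = l :=
  le_antisymm (specRad_le_of_mulVec_le_s16 hC hw hl h.le)
    (le_specRad_of_mulVec_eq_smul (lt_of_strongLT hw).ne' hl h)

theorem specRad_transpose (C : Matrix (Fin n) (Fin n) ℝ) : specRad Cᵀ = specRad C := by
  rw [specRad, specRad, transpose_map, spectrum_transpose]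

theorem specRad_of_isEmpty [IsEmpty (Fin n)] (C : Matrix (Fin n) (Fin n) ℝ) :
    specRad C = 0 := by
  rw [specRad, spectrum.of_subsingleton, Set.image_empty, Real.sSup_empty]

end SpectralRadius

section NonlinearPerronFrobenius

variable {ι : Type*} [Fintype ι]

theorem exists_pos_add_smul_le_of_forall_lt {x y : ι → ℝ} (hxy : ∀ i, x i < y i)
    (v : ι → ℝ) : ∃ ε : ℝ, 0 < ε ∧ x + ε • v ≤ y := by
  have hev : ∀ᶠ ε in 𝓝 (0 : ℝ), ∀ i, x i + ε * v i < y i :=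
    eventually_all.2 fun i => ContinuousAt.eventually_lt (by fun_prop) continuousAt_const
      (by simpa using hxy i)
  obtain ⟨ε, hε, hε0⟩ :=
    ((hev.filter_mono nhdsWithin_le_nhds).and self_mem_nhdsWithin).exists (f := 𝓝[>] (0 : ℝ))
  exact ⟨ε, hε0, fun i => (hε i).le⟩

theorem isCompact_setOf_smul_le {T : (ι → ℝ) → ι → ℝ} (hT : Continuous T) :
    IsCompact {p : (ι → ℝ) × ℝ | p.1 ∈ stdSimplex ℝ ι ∧ 0 ≤ p.2 ∧ p.2 • p.1 ≤ T p.1} := by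
  obtain ⟨b, hb⟩ := (isCompact_stdSimplex ℝ ι).bddAbove_image
    (f := fun v => ∑ i, T v i) (by fun_prop)
  refine ((isCompact_stdSimplex ℝ ι).prod (isCompact_Icc (a := 0) (b := b))).of_isClosed_subset
    ?_ ?_
  · exact ((isClosed_stdSimplex ℝ ι).preimage continuous_fst).inter
      ((isClosed_le continuous_const continuous_snd).inter
        (isClosed_le (continuous_snd.smul continuous_fst) (hT.comp continuous_fst)))
  · rintro ⟨v, l⟩ ⟨hv, hl, hlv⟩
    refine ⟨hv, hl, le_trans ?_ (hb ⟨v, hv, rfl⟩)⟩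
    calc l = ∑ i, l * v i := by rw [← Finset.mul_sum, hv.2, mul_one]
      _ ≤ ∑ i, T v i := Finset.sum_le_sum fun i _ => hlv i

theorem exists_pos_eigenvector [Nonempty ι] {T : (ι → ℝ) → ι → ℝ} (hT : Continuous T)
    (hhom : ∀ c : ℝ, 0 ≤ c → ∀ v, T (c • v) = c • T v)
    (hmono : ∀ x y, x < y → ∀ i, T x i < T y i) :
    ∃ w : ι → ℝ, ∃ l : ℝ, (∀ i, 0 < w i) ∧ 0 < l ∧ T w = l • w := by
  classical
  have hT0 : T 0 = 0 := by simpa using hhom 0 le_rfl 0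
  have hTpos : ∀ v ∈ stdSimplex ℝ ι, ∀ i, 0 < T v i := fun v hv i => by
    have hv0 : 0 < v := lt_of_le_of_ne hv.1 fun h => by simpa [← h] using hv.2
    simpa [hT0] using hmono 0 v hv0 i
  obtain ⟨i₀⟩ := ‹Nonempty ι›
  obtain ⟨⟨w, l⟩, hP, hmax⟩ := (isCompact_setOf_smul_le hT).exists_isMaxOn
    ⟨(Pi.single i₀ 1, 0), single_mem_stdSimplex ℝ i₀, le_rfl,
      fun i => by simpa using (hTpos _ (single_mem_stdSimplex ℝ i₀) i).le⟩
    continuous_snd.continuousOn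
  obtain ⟨hw, hl, hlw⟩ : w ∈ stdSimplex ℝ ι ∧ 0 ≤ l ∧ l • w ≤ T w := hP
  have hTw : T w = l • w := by
    by_contra hne
    -- if `l • w < T w`, then the normalized `T w` satisfies `l • w' < T w'` in every coordinate,
    -- so `l` is not maximal
    set s := ∑ i, T w i
    have hs : 0 < s := Finset.sum_pos (fun i _ => hTpos w hw i) Finset.univ_nonempty
    set w' := s⁻¹ • T w
    have hw' : w' ∈ stdSimplex ℝ ι :=
      ⟨fun i => mul_nonneg (inv_nonneg.2 hs.le) (hTpos w hw i).le, by
        simp only [w', Pi.smul_apply, smul_eq_mul, ← Finset.mul_sum]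
        exact inv_mul_cancel₀ hs.ne'⟩
    have hgap : ∀ i, (l • w') i < T w' i := fun i => by
      have := hmono _ _ (lt_of_le_of_ne hlw (Ne.symm hne)) i
      rw [hhom l hl] at this
      simpa [w', hhom _ (inv_nonneg.2 hs.le), mul_left_comm l] using
        mul_lt_mul_of_pos_left this (inv_pos.2 hs)
    obtain ⟨ε, hε, hle⟩ := exists_pos_add_smul_le_of_forall_lt hgap w'
    have := hmax (a := (w', l + ε)) ⟨hw', by positivity, by rwa [add_smul]⟩
    exact (lt_add_of_pos_right l hε).not_ge this
  have hlw : ∀ i, 0 < l * w i := fun i => by simpa [hTw] using hTpos w hw i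
  exact ⟨w, l, fun i => pos_of_mul_pos_right (hlw i) hl,
    pos_of_mul_pos_left (hlw i₀) (hw.1 i₀), hTw⟩

end NonlinearPerronFrobenius

theorem Matrix.exists_pos_mulVec_eq_smul {n : Type*} [Fintype n] [Nonempty n]
    {C : Matrix n n ℝ} (hC : ∀ i j, 0 < C i j) :
    ∃ v : n → ℝ, ∃ l : ℝ, (∀ i, 0 < v i) ∧ 0 < l ∧ C *ᵥ v = l • v :=
  exists_pos_eigenvector (T := (C *ᵥ ·)) (by fun_prop) (fun c _ v => mulVec_smul C c v)
    (fun _ _ hxy => mulVec_lt_mulVec_of_pos hC hxy)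

theorem le_specRad_of_smul_le_mulVec {n : ℕ} [Nonempty (Fin n)] {C : Matrix (Fin n) (Fin n) ℝ}
    (hC : ∀ i j, 0 < C i j) {w : Fin n → ℝ} (hw : ∀ i, 0 < w i) {l : ℝ} (h : l • w ≤ C *ᵥ w) :
    l ≤ specRad C := by
  -- pair `w` with a positive left Perron eigenvector `y` of `C`
  obtain ⟨y, r, hy, hr, hyr⟩ := exists_pos_mulVec_eq_smul (C := Cᵀ) fun i j => hC j i
  have hyw : 0 < y ⬝ᵥ w := Finset.sum_pos (fun i _ => mul_pos (hy i) (hw i)) Finset.univ_nonempty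
  have hlr : l * (y ⬝ᵥ w) ≤ r * (y ⬝ᵥ w) := calc
    l * (y ⬝ᵥ w) = y ⬝ᵥ (l • w) := by rw [dotProduct_smul, smul_eq_mul]
    _ ≤ y ⬝ᵥ (C *ᵥ w) := dotProduct_le_dotProduct_of_nonneg_left h fun i => (hy i).le
    _ = r * (y ⬝ᵥ w) := by rw [dotProduct_mulVec, ← mulVec_transpose, hyr, smul_dotProduct,
      smul_eq_mul]
  calc l ≤ r := le_of_mul_le_mul_right hlr hyw
    _ = specRad Cᵀ := (specRad_eq_of_mulVec_eq_smul (fun i j => (hC j i).le) hy hr.le hyr).symm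
    _ = specRad C := specRad_transpose C

section Envelope

variable {m n : Type*} [Fintype n] {S : Set (Matrix m n ℝ)}

noncomputable def supMulVec (S : Set (Matrix m n ℝ)) (v : n → ℝ) : m → ℝ :=
  fun i => sSup ((fun B : Matrix m n ℝ => (B *ᵥ v) i) '' S)

noncomputable def infMulVec (S : Set (Matrix m n ℝ)) (v : n → ℝ) : m → ℝ :=
  fun i => sInf ((fun B : Matrix m n ℝ => (B *ᵥ v) i) '' S)

theorem mulVec_le_supMulVec (hS : IsCompact S) {B : Matrix m n ℝ} (hB : B ∈ S) (v : n → ℝ) :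
    B *ᵥ v ≤ supMulVec S v :=
  fun i => le_csSup (hS.bddAbove_image (by fun_prop)) ⟨B, hB, rfl⟩

theorem infMulVec_le_mulVec (hS : IsCompact S) {B : Matrix m n ℝ} (hB : B ∈ S) (v : n → ℝ) :
    infMulVec S v ≤ B *ᵥ v :=
  fun i => csInf_le (hS.bddBelow_image (by fun_prop)) ⟨B, hB, rfl⟩

theorem exists_mulVec_apply_eq_supMulVec (hS : IsCompact S) (hne : S.Nonempty) (v : n → ℝ)
    (i : m) : ∃ B ∈ S, (B *ᵥ v) i = supMulVec S v i :=
  (hS.image (by fun_prop)).sSup_mem (hne.image _)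

theorem exists_mulVec_apply_eq_infMulVec (hS : IsCompact S) (hne : S.Nonempty) (v : n → ℝ)
    (i : m) : ∃ B ∈ S, (B *ᵥ v) i = infMulVec S v i :=
  (hS.image (by fun_prop)).sInf_mem (hne.image _)

theorem supMulVec_eq_mulVec {B₀ : Matrix m n ℝ} (hB₀ : B₀ ∈ S) {v : n → ℝ}
    (h : ∀ B ∈ S, B *ᵥ v ≤ B₀ *ᵥ v) : supMulVec S v = B₀ *ᵥ v :=
  funext fun i => IsGreatest.csSup_eq ⟨⟨B₀, hB₀, rfl⟩, by rintro _ ⟨B, hB, rfl⟩; exact h B hB i⟩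

theorem infMulVec_eq_mulVec {B₀ : Matrix m n ℝ} (hB₀ : B₀ ∈ S) {v : n → ℝ}
    (h : ∀ B ∈ S, B₀ *ᵥ v ≤ B *ᵥ v) : infMulVec S v = B₀ *ᵥ v :=
  funext fun i => IsLeast.csInf_eq ⟨⟨B₀, hB₀, rfl⟩, by rintro _ ⟨B, hB, rfl⟩; exact h B hB i⟩

theorem continuous_supMulVec (hS : IsCompact S) : Continuous (supMulVec S) :=
  continuous_pi fun i => hS.continuous_sSup (f := fun v B => (B *ᵥ v) i) (by fun_prop)

theorem continuous_infMulVec (hS : IsCompact S) : Continuous (infMulVec S) :=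
  continuous_pi fun i => hS.continuous_sInf (f := fun v B => (B *ᵥ v) i) (by fun_prop)

theorem supMulVec_smul {c : ℝ} (hc : 0 ≤ c) (v : n → ℝ) :
    supMulVec S (c • v) = c • supMulVec S v := by
  funext i
  rw [Pi.smul_apply, supMulVec, supMulVec, ← Real.sSup_smul_of_nonneg hc, ← Set.image_smul,
    Set.image_image]
  simp only [mulVec_smul, Pi.smul_apply]

theorem infMulVec_smul {c : ℝ} (hc : 0 ≤ c) (v : n → ℝ) :
    infMulVec S (c • v) = c • infMulVec S v := by
  funext i
  rw [Pi.smul_apply, infMulVec, infMulVec, ← Real.sInf_smul_of_nonneg hc, ← Set.image_smul,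
    Set.image_image]
  simp only [mulVec_smul, Pi.smul_apply]

theorem supMulVec_lt_supMulVec (hS : IsCompact S) (hne : S.Nonempty)
    (hpos : ∀ B ∈ S, ∀ i j, 0 < B i j) {x y : n → ℝ} (hxy : x < y) (i : m) :
    supMulVec S x i < supMulVec S y i := by
  obtain ⟨B, hB, hBx⟩ := exists_mulVec_apply_eq_supMulVec hS hne x i
  exact hBx ▸ (mulVec_lt_mulVec_of_pos (hpos B hB) hxy i).trans_le (mulVec_le_supMulVec hS hB y i)

theorem infMulVec_lt_infMulVec (hS : IsCompact S) (hne : S.Nonempty)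
    (hpos : ∀ B ∈ S, ∀ i j, 0 < B i j) {x y : n → ℝ} (hxy : x < y) (i : m) :
    infMulVec S x i < infMulVec S y i := by
  obtain ⟨B, hB, hBy⟩ := exists_mulVec_apply_eq_infMulVec hS hne y i
  exact hBy ▸ (infMulVec_le_mulVec hS hB x i).trans_lt (mulVec_lt_mulVec_of_pos (hpos B hB) hxy i)

theorem exists_pos_eigenvector_infMulVec_supMulVec [Fintype m] [Nonempty m] [Nonempty n]
    {𝒜 : Set (Matrix n m ℝ)} {ℬ : Set (Matrix m n ℝ)} (h𝒜c : IsCompact 𝒜) (hℬc : IsCompact ℬ)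
    (h𝒜ne : 𝒜.Nonempty) (hℬne : ℬ.Nonempty) (h𝒜 : ∀ A ∈ 𝒜, ∀ i j, 0 < A i j)
    (hℬ : ∀ B ∈ ℬ, ∀ i j, 0 < B i j) :
    ∃ w : n → ℝ, ∃ l : ℝ, (∀ i, 0 < w i) ∧ 0 < l ∧ infMulVec 𝒜 (supMulVec ℬ w) = l • w :=
  exists_pos_eigenvector ((continuous_infMulVec h𝒜c).comp (continuous_supMulVec hℬc))
    (fun c hc v => by simp only [supMulVec_smul hc, infMulVec_smul hc])
    (fun _ _ hxy => infMulVec_lt_infMulVec h𝒜c h𝒜ne h𝒜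
      (lt_of_strongLT (supMulVec_lt_supMulVec hℬc hℬne hℬ hxy)))

end Envelope

section HSet

variable {N M : ℕ} {S : Set (Matrix (Fin N) (Fin M) ℝ)}

theorem IsHSet.exists_forall_mulVec_le (hS : IsHSet S) (hc : IsCompact S) (hne : S.Nonempty)
    {u : Fin M → ℝ} (hu : ∀ j, 0 < u j) : ∃ A₀ ∈ S, ∀ A ∈ S, A₀ *ᵥ u ≤ A *ᵥ u := by
  -- a minimizer of `∑ i, (A *ᵥ u) i` cannot be undercut, so (H1) makes it a minimum
  obtain ⟨A₀, hA₀, hmin⟩ := hc.exists_isMinOn hne (f := fun A => ∑ i, (A *ᵥ u) i)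
    (by fun_prop)
  refine ⟨A₀, hA₀, ?_⟩
  rcases (hS.2 A₀ hA₀ u hu).1 with h | ⟨A', hA', hle, hne'⟩
  · exact h
  · exact absurd (hmin hA') (Fintype.sum_strictMono (lt_of_le_of_ne hle hne')).not_ge

theorem IsHSet.exists_forall_mulVec_ge (hS : IsHSet S) (hc : IsCompact S) (hne : S.Nonempty)
    {u : Fin M → ℝ} (hu : ∀ j, 0 < u j) : ∃ A₀ ∈ S, ∀ A ∈ S, A *ᵥ u ≤ A₀ *ᵥ u := by
  obtain ⟨A₀, hA₀, hmax⟩ := hc.exists_isMaxOn hne (f := fun A => ∑ i, (A *ᵥ u) i)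
    (by fun_prop)
  refine ⟨A₀, hA₀, ?_⟩
  rcases (hS.2 A₀ hA₀ u hu).2 with h | ⟨A', hA', hle, hne'⟩
  · exact h
  · exact absurd (hmax hA') (Fintype.sum_strictMono (lt_of_le_of_ne hle hne'.symm)).not_ge

end HSet

theorem stmt16 {N M : ℕ} (𝒜 : Set (Matrix (Fin N) (Fin M) ℝ))
    (ℬ : Set (Matrix (Fin M) (Fin N) ℝ))
    (h𝒜 : IsHSet 𝒜) (hℬ : IsHSet ℬ)
    (h𝒜c : IsCompact 𝒜) (hℬc : IsCompact ℬ)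
    (h𝒜ne : 𝒜.Nonempty) (hℬne : ℬ.Nonempty) :
    ∃ A₀ ∈ 𝒜, ∃ B₀ ∈ ℬ, ∀ A ∈ convexHull ℝ 𝒜, ∀ B ∈ convexHull ℝ ℬ,
      specRad (A₀ * B) ≤ specRad (A₀ * B₀) ∧ specRad (A₀ * B₀) ≤ specRad (A * B₀) := by
  rcases isEmpty_or_nonempty (Fin N) with hN | hN
  · exact ⟨_, h𝒜ne.some_mem, _, hℬne.some_mem, fun _ _ _ _ => by simp [specRad_of_isEmpty]⟩
  rcases isEmpty_or_nonempty (Fin M) with hM | hM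
  · exact ⟨_, h𝒜ne.some_mem, _, hℬne.some_mem, fun A _ B _ => by
      simp [Subsingleton.elim A h𝒜ne.some, Subsingleton.elim B hℬne.some]⟩
  obtain ⟨w, l, hw, hl, hwl⟩ :=
    exists_pos_eigenvector_infMulVec_supMulVec h𝒜c hℬc h𝒜ne hℬne h𝒜.1 hℬ.1
  obtain ⟨B₀, hB₀, hB₀max⟩ := hℬ.exists_forall_mulVec_ge hℬc hℬne hw
  obtain ⟨A₀, hA₀, hA₀min⟩ :=
    h𝒜.exists_forall_mulVec_le h𝒜c h𝒜ne (mulVec_pos (hℬ.1 B₀ hB₀) hw)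
  have heig : (A₀ * B₀) *ᵥ w = l • w := by
    rwa [supMulVec_eq_mulVec hB₀ hB₀max, infMulVec_eq_mulVec hA₀ hA₀min, mulVec_mulVec] at hwl
  have hA₀pos := h𝒜.1 A₀ hA₀
  have hB₀pos := hℬ.1 B₀ hB₀
  have hρ : specRad (A₀ * B₀) = l :=
    specRad_eq_of_mulVec_eq_smul (fun i k => (mul_apply_pos hA₀pos hB₀pos i k).le) hw hl.le heig
  refine ⟨A₀, hA₀, B₀, hB₀, fun A hA B hB => ⟨?_, ?_⟩⟩ <;> rw [hρ]
  · have hBpos := convexHull_min hℬ.1 convex_setOf_pos hB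
    have hBw : B *ᵥ w ≤ B₀ *ᵥ w := convexHull_min hB₀max (convex_setOf_mulVec_le _ _) hB
    refine specRad_le_of_mulVec_le_s16 (fun i k => (mul_apply_pos hA₀pos hBpos i k).le) hw hl.le ?_
    rw [← heig, ← mulVec_mulVec, ← mulVec_mulVec]
    exact mulVec_mono (fun i j => (hA₀pos i j).le) hBw
  · have hApos := convexHull_min h𝒜.1 convex_setOf_pos hA
    have hAu : A₀ *ᵥ B₀ *ᵥ w ≤ A *ᵥ B₀ *ᵥ w :=
      convexHull_min hA₀min (convex_setOf_le_mulVec _ _) hA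
    refine le_specRad_of_smul_le_mulVec (mul_apply_pos hApos hB₀pos) hw ?_
    rwa [← heig, ← mulVec_mulVec, ← mulVec_mulVec]
end
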